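/- In the bead-reversal setting on G, if a bead configuration satisfies σ(κ) < ρ(κ) for every simple cycle κ of G, then the orientation of G induced by the configuration is acyclic. Equivalently, if the induced orientation contains a directed cycle along a simple cycle κ, then σ(κ) ≥ ρ(κ). -/

import Mathlib

/-!
A two-way oriented edge `{u, v}` would carry at least `r u + r v > e_uv` beads, so the induced
orientation is asymmetric. Hence a directed closed walk can be pruned to a directed simple
cycle `κ`; at the head of each of its darts `u → v` lie at least `r v` beads, so
`ρ(κ) ≤ σ⁺(κ)`.
-/

variable {V : Type*}

attribute [local instance] Classical.propDecidable

/-- `a` is a bead configuration on `G` (with bead numbers `r`): `a u v` is the number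
of beads at `u`'s end of the edge `{u, v}`; each edge `{u, v}` carries
`e_uv = r u + r v − gcd (r u) (r v)` beads in total, and every bead count is a
multiple of `gcd (r u) (r v)`. -/
def IsBeadConfig (G : SimpleGraph V) (r : V → ℕ) (a : V → V → ℕ) : Prop :=
  ∀ u v, G.Adj u v →
    a u v + a v u = r u + r v - Nat.gcd (r u) (r v) ∧ Nat.gcd (r u) (r v) ∣ a u v

/-- A vertex `v` is enabled when every edge incident to `v` carries at least `r v`
beads at `v`'s end. -/
def Enabled (G : SimpleGraph V) (r : V → ℕ) (a : V → V → ℕ) (v : V) : Prop :=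
  ∀ u, G.Adj v u → r v ≤ a v u

/-- The bead-reversal step at vertex `v`: `r v` beads are moved from `v`'s end to the
opposite end of every edge incident to `v`. -/
noncomputable def beadStep (G : SimpleGraph V) (r : V → ℕ) (a : V → V → ℕ) (v : V) :
    V → V → ℕ :=
  fun x y =>
    if x = v ∧ G.Adj v y then a x y - r v
    else if y = v ∧ G.Adj v x then a x y + r v
    else a x y

/-- `σ⁺(κ)`: the sum, over the edges of the cycle `κ` traversed as `u → v` along the
traversal direction of `κ`, of the number of beads at `v`'s end. -/
def sigmaPlus {G : SimpleGraph V} {w : V} (a : V → V → ℕ) (κ : G.Walk w w) : ℕ :=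
  (κ.darts.map (fun d => a d.toProd.2 d.toProd.1)).sum

/-- `σ⁻(κ)`: the sum, over the edges of the cycle `κ` traversed as `u → v` along the
traversal direction opposite to that of `κ`, of the number of beads at `u`'s end. -/
def sigmaMinus {G : SimpleGraph V} {w : V} (a : V → V → ℕ) (κ : G.Walk w w) : ℕ :=
  (κ.darts.map (fun d => a d.toProd.1 d.toProd.2)).sum

/-- `ρ(κ)`: the sum of `r v` over the vertices `v` of the cycle `κ`. -/
def rho {G : SimpleGraph V} {w : V} (r : V → ℕ) (κ : G.Walk w w) : ℕ :=
  (κ.support.tail.map r).sum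

/-- The orientation of `G` induced by a bead configuration: the edge `{u, v}` is
directed `u → v` exactly when there are at least `r v` beads at `v`'s end. -/
def inducedOrientation (G : SimpleGraph V) (r : V → ℕ) (a : V → V → ℕ) :
    V → V → Prop :=
  fun u v => G.Adj u v ∧ r v ≤ a v u

namespace SimpleGraph.Walk

variable {G : SimpleGraph V} {R : V → V → Prop}

theorem exists_forall_darts_of_transGen (hRG : ∀ u v, R u v → G.Adj u v) {u v : V}
    (h : Relation.TransGen R u v) :
    ∃ p : G.Walk u v, ¬ p.Nil ∧ ∀ d ∈ p.darts, R d.fst d.snd := by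
  induction h using Relation.TransGen.head_induction_on with
  | single huv => exact ⟨cons (hRG _ _ huv) nil, by simp, by simpa using huv⟩
  | head hxy _ ih =>
    obtain ⟨p, -, hp⟩ := ih
    exact ⟨cons (hRG _ _ hxy) p, by simp, by simpa [hxy] using hp⟩

/-- `cycleBypass` keeps only darts of the walk, and the result can fail to be a cycle only by
traversing its first edge backwards, which asymmetry forbids. -/
theorem exists_isCycle_forall_darts_of_transGen (hRG : ∀ u v, R u v → G.Adj u v)
    (hR : ∀ u v, R u v → ¬ R v u) {v : V} (h : Relation.TransGen R v v) :
    ∃ c : G.Walk v v, c.IsCycle ∧ ∀ d ∈ c.darts, R d.fst d.snd := by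
  obtain ⟨p, hp, hpR⟩ := exists_forall_darts_of_transGen hRG h
  cases p with
  | nil => simp at hp
  | @cons _ y _ hvy q =>
    have hcR : ∀ d ∈ (cons hvy q).cycleBypass.darts, R d.fst d.snd :=
      fun d hd => hpR d ((cons hvy q).darts_cycleBypass_sublist_darts.subset hd)
    refine ⟨_, (cons_isCycle_iff _ hvy).mpr ⟨q.bypass_isPath, fun hmem => ?_⟩, hcR⟩
    obtain ⟨d, hd, hde⟩ := List.mem_map.mp hmem
    rcases dart_edge_eq_mk'_iff'.mp hde with ⟨-, rfl⟩ | ⟨rfl, rfl⟩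
    · have hy : d.snd ∈ q.bypass.support.tail := by
        rw [← map_snd_darts]
        exact List.mem_map_of_mem hd
      have hnodup := q.bypass_isPath.support_nodup
      rw [← cons_tail_support] at hnodup
      exact (List.nodup_cons.mp hnodup).1 hy
    · exact hR _ _ (hcR d (List.mem_cons_of_mem _ hd)) (hcR _ List.mem_cons_self)

end SimpleGraph.Walk

theorem IsBeadConfig.not_inducedOrientation_of_inducedOrientation {G : SimpleGraph V}
    {r : V → ℕ} {a : V → V → ℕ} (hr : ∀ v, 0 < r v) (hconf : IsBeadConfig G r a) {u v : V}
    (huv : inducedOrientation G r a u v) : ¬ inducedOrientation G r a v u := by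
  obtain ⟨hadj, hv⟩ := huv
  rintro ⟨-, hu⟩
  obtain ⟨hsum, -⟩ := hconf u v hadj
  have hgcd_pos : 0 < Nat.gcd (r u) (r v) := Nat.gcd_pos_of_pos_left _ (hr u)
  have hgcd_le : Nat.gcd (r u) (r v) ≤ r u := Nat.le_of_dvd (hr u) (Nat.gcd_dvd_left _ _)
  omega

theorem rho_le_sigmaPlus {G : SimpleGraph V} {r : V → ℕ} {a : V → V → ℕ} {w : V}
    {κ : G.Walk w w} (h : ∀ d ∈ κ.darts, r d.snd ≤ a d.snd d.fst) :
    rho r κ ≤ sigmaPlus a κ := by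
  rw [rho, sigmaPlus, ← κ.map_snd_darts, List.map_map]
  exact List.sum_le_sum h

theorem sigma_lt_rho_induced_orientation_acyclic_general
    (G : SimpleGraph V)
    (r : V → ℕ) (hr : ∀ v, 0 < r v)
    (a : V → V → ℕ) (hconf : IsBeadConfig G r a)
    (hσ : ∀ (w : V) (κ : G.Walk w w), κ.IsCycle →
      max (sigmaPlus a κ) (sigmaMinus a κ) < rho r κ) :
    ∀ v, ¬ Relation.TransGen (inducedOrientation G r a) v v := by
  intro v hv
  obtain ⟨κ, hκ, hκR⟩ := SimpleGraph.Walk.exists_isCycle_forall_darts_of_transGen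
    (fun _ _ h => h.1) (fun _ _ => hconf.not_inducedOrientation_of_inducedOrientation hr) hv
  have hρσ : rho r κ ≤ sigmaPlus a κ := rho_le_sigmaPlus fun d hd => (hκR d hd).2
  exact (hσ v κ hκ).not_ge (hρσ.trans (le_max_left _ _))

/-- If a bead configuration satisfies `σ(κ) < ρ(κ)` for every simple cycle `κ` of `G`,
then the orientation of `G` induced by the configuration is acyclic. -/
theorem sigma_lt_rho_induced_orientation_acyclic [Fintype V]
    (G : SimpleGraph V) (hG : G.Connected)
    (r : V → ℕ) (hr : ∀ v, 0 < r v)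
    (a : V → V → ℕ) (hconf : IsBeadConfig G r a)
    (hσ : ∀ (w : V) (κ : G.Walk w w), κ.IsCycle →
      max (sigmaPlus a κ) (sigmaMinus a κ) < rho r κ) :
    ∀ v, ¬ Relation.TransGen (inducedOrientation G r a) v v :=
  sigma_lt_rho_induced_orientation_acyclic_general G r hr a hconf hσ
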